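/- Let R ⊆ {1,…,d} be a ruler and let A ∈ ℝ^{d×d} be a symmetric matrix. Define the Toeplitz matrix = Toep(â) by â_s = (1/|R_s|) Σ_{(j,k)∈R_s} A_{j,k} for s ∈ {0,…,d−1}. Then for every symmetric Toeplitz matrix M ∈ ℝ^{d×d}, the principal submatrices indexed by R satisfy tr(Â_R M_R) = tr(A_R M_R). -/

import Mathlib

open MeasureTheory ProbabilityTheory Matrix Real

noncomputable section

/-- The uniform quantizer with level `Δ`: `Q_Δ(x) = Δ(⌊x/Δ⌋ + 1/2)`. -/
def quant (Δ x : ℝ) : ℝ := Δ * (⌊x / Δ⌋ + 1 / 2)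

/-- The uniform distribution on `[-Δ/2, Δ/2]`. -/
def unifMeasure (Δ : ℝ) : Measure ℝ :=
  (ENNReal.ofReal Δ)⁻¹ • (volume.restrict (Set.Icc (-(Δ / 2)) (Δ / 2)))

/-- The triangular-dither distribution: the law of the sum of two independent
uniform random variables on `[-Δ/2, Δ/2]`. -/
def triMeasure (Δ : ℝ) : Measure ℝ :=
  Measure.map (fun p : ℝ × ℝ => p.1 + p.2) ((unifMeasure Δ).prod (unifMeasure Δ))

/-- The centered multivariate Gaussian measure `N(0, T)` on `ℝ^d`, realized as the
pushforward of the standard Gaussian by the positive semidefinite square root of `T`. -/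
def multiGaussian {d : ℕ} (T : Matrix (Fin d) (Fin d) ℝ) (hT : T.PosSemidef) :
    Measure (Fin d → ℝ) :=
  Measure.map (fun z => ((hT.1.eigenvectorUnitary : Matrix (Fin d) (Fin d) ℝ) *
      diagonal (fun i => Real.sqrt (hT.1.eigenvalues i)) *
      (star hT.1.eigenvectorUnitary : Matrix (Fin d) (Fin d) ℝ)).mulVec z) (Measure.pi fun _ : Fin d => gaussianReal 0 1)

/-- `R_s`: the ordered pairs `(j, k) ∈ R × R` with `j - k = s`. -/
def pairsOf {d : ℕ} (R : Finset (Fin d)) (s : ℕ) : Finset (Fin d × Fin d) :=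
  (R ×ˢ R).filter fun p => (p.1 : ℕ) = (p.2 : ℕ) + s

/-- A ruler: each distance `s ∈ {0, …, d-1}` is realized by some pair in `R`. -/
def IsRuler {d : ℕ} (R : Finset (Fin d)) : Prop :=
  ∀ s < d, (pairsOf R s).Nonempty

/-- The coverage coefficient `φ(R) = Σ_{s=1}^{d-1} 1/|R_s|`. -/
def coverage {d : ℕ} (R : Finset (Fin d)) : ℝ :=
  ∑ s ∈ Finset.Ico 1 d, (1 : ℝ) / (pairsOf R s).card

/-- The symmetric Toeplitz matrix generated by `a`, with `Toep(a)_{j,k} = a_{|j-k|}`. -/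
def toep {d : ℕ} (a : Fin d → ℝ) : Matrix (Fin d) (Fin d) ℝ :=
  fun j k => a ⟨Nat.dist j.1 k.1, by
    have hj := j.isLt; have hk := k.isLt; simp only [Nat.dist]; omega⟩

/-- The `ℓ²` operator (spectral) norm of a matrix. -/
def opNorm {m : Type*} [Fintype m] [DecidableEq m] (A : Matrix m m ℝ) : ℝ :=
  ‖Matrix.toEuclideanCLM (𝕜 := ℝ) A‖

/-- The Frobenius norm of a matrix. -/
def frobNorm {m : Type*} [Fintype m] (A : Matrix m m ℝ) : ℝ :=
  Real.sqrt (∑ i, ∑ j, (A i j) ^ 2)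

/-- The entrywise maximum norm of a matrix. -/
def maxNorm {m : Type*} [Fintype m] (A : Matrix m m ℝ) : ℝ :=
  ⨆ i, ⨆ j, |A i j|

/-- The principal submatrix of `A` with rows and columns indexed by `R`. -/
def subMatrix {d : ℕ} (A : Matrix (Fin d) (Fin d) ℝ) (R : Finset (Fin d)) :
    Matrix R R ℝ :=
  A.submatrix (fun i : R => (i : Fin d)) (fun j : R => (j : Fin d))

/-- The ruler-based quantized coefficient estimator
`â_s = (1/(n|R_s|)) Σ_l Σ_{(j,k)∈R_s} ẋ_j^{(l)} ẋ_k^{(l)} − (Δ²/4)·1{s=0}`. -/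
def hatCoef {d : ℕ} (Δ : ℝ) (R : Finset (Fin d)) (n : ℕ)
    (xdot : Fin n → Fin d → ℝ) (s : ℕ) : ℝ :=
  (1 / (n * (pairsOf R s).card)) *
      ∑ l, ∑ p ∈ pairsOf R s, xdot l p.1 * xdot l p.2
    - Δ ^ 2 / 4 * (if s = 0 then 1 else 0)

/-- The ruler-based quantized Toeplitz covariance estimator `T̂ = Toep(â)`. -/
def hatT {d : ℕ} (Δ : ℝ) (R : Finset (Fin d)) (n : ℕ)
    (xdot : Fin n → Fin d → ℝ) : Matrix (Fin d) (Fin d) ℝ :=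
  toep fun s => hatCoef Δ R n xdot s.1

/-- The quantized samples `ẋ^{(l)} = Q_Δ(x^{(l)} + τ^{(l)})`, as a function of the
random outcome `ω`. -/
def xdotOf {d n : ℕ} {Ω : Type*} (Δ : ℝ) (x τ : Fin n → Ω → Fin d → ℝ) (ω : Ω) :
    Fin n → Fin d → ℝ :=
  fun l i => quant Δ (x l ω i + τ l ω i)

/-- The setting of the ruler-based quantized Toeplitz covariance estimation problem:
`T` is a positive semidefinite symmetric Toeplitz matrix, `x^{(1)}, …, x^{(n)}` are
i.i.d. samples from `N(0, T)`, the dithers `τ^{(1)}, …, τ^{(n)}` have i.i.d. triangular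
entries at level `Δ`, and all samples and dithers are jointly independent. -/
structure QuantSetting {d n : ℕ} {Ω : Type*} [MeasurableSpace Ω] (μ : Measure Ω)
    (T : Matrix (Fin d) (Fin d) ℝ) (Δ : ℝ)
    (x τ : Fin n → Ω → Fin d → ℝ) : Prop where
  psd : T.PosSemidef
  toeplitz : ∃ a : Fin d → ℝ, T = toep a
  quantLevel : 0 < Δ
  meas_x : ∀ l, Measurable (x l)
  meas_τ : ∀ l, Measurable (τ l)
  law_x : ∀ l, μ.map (x l) = multiGaussian T psd
  law_τ : ∀ l, μ.map (τ l) = Measure.pi fun _ : Fin d => triMeasure Δ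
  indep : iIndepFun (Sum.elim x τ) μ

end
noncomputable section

/-- The ruler `R_α = {1,…,d^α} ∪ {d, d−d^{1−α}, …, d−(d^α−1)d^{1−α}}` (with the
positions `1,…,d` represented by `Fin d`), parametrized by `a = d^α`, `b = d^{1−α}`. -/
def rulerAlpha (d a b : ℕ) : Finset (Fin d) :=
  (Finset.univ.filter fun j : Fin d => (j : ℕ) < a) ∪
    (Finset.univ.filter fun j : Fin d => ∃ t ∈ Finset.range a, (j : ℕ) + t * b + 1 = d)

/-- `L_e(x) = e_0 + 2 Σ_{s=1}^{d-1} e_s cos(2πsx)`. -/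
def Lfun {d : ℕ} (e : Fin d → ℝ) (x : ℝ) : ℝ :=
  ∑ s : Fin d, (if (s : ℕ) = 0 then 1 else 2) * e s * Real.cos (2 * Real.pi * s * x)

/-- Entrywise thresholding of a matrix at level `ζ`. -/
def thresholdMat {d : ℕ} (ζ : ℝ) (A : Matrix (Fin d) (Fin d) ℝ) :
    Matrix (Fin d) (Fin d) ℝ :=
  fun i j => if ζ ≤ |A i j| then A i j else 0

end

/-!
Write `tr(B_R M_R) = Σ_{(j,k) ∈ R×R} B_{jk} M_{kj}` and group the pairs by the signed offset
`j - k ∈ ℤ`. The Toeplitz factor `M_{kj}` is constant on each group, so it suffices that `Â` and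
`A` have the same sum over each group. For an offset `s ≥ 0` the group is `R_s`, on which `Â` is
constant equal to the average of `A` over `R_s`; the group of offset `-s` is the transpose of
`R_s`, and both matrices are symmetric.
-/

theorem Finset.sum_mul_eq_sum_mul_of_sum_fiber_eq {ι κ β : Type*} [DecidableEq κ]
    [NonUnitalNonAssocSemiring β] {s : Finset ι} {g : ι → κ} {f f' h : ι → β}
    (hh : ∀ i ∈ s, ∀ j ∈ s, g i = g j → h i = h j)
    (hf : ∀ k, ∑ i ∈ s with g i = k, f i = ∑ i ∈ s with g i = k, f' i) :
    ∑ i ∈ s, f i * h i = ∑ i ∈ s, f' i * h i := by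
  rw [← sum_fiberwise_of_maps_to (fun i hi => mem_image_of_mem g hi),
    ← sum_fiberwise_of_maps_to (fun i hi => mem_image_of_mem g hi)]
  refine sum_congr rfl fun k hk => ?_
  obtain ⟨i₀, hi₀, rfl⟩ := mem_image.1 hk
  have factor (F : ι → β) :
      ∑ i ∈ s with g i = g i₀, F i * h i = (∑ i ∈ s with g i = g i₀, F i) * h i₀ := by
    rw [sum_mul]
    exact sum_congr rfl fun i hi => by
      rw [hh i (mem_filter.1 hi).1 i₀ hi₀ (mem_filter.1 hi).2]
  rw [factor, factor, hf]

theorem trace_subMatrix_mul {d : ℕ} (R : Finset (Fin d)) (B C : Matrix (Fin d) (Fin d) ℝ) :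
    trace (subMatrix B R * subMatrix C R) = ∑ p ∈ R ×ˢ R, B p.1 p.2 * C p.2 p.1 := by
  simp only [trace, diag, mul_apply, subMatrix, submatrix_apply, Finset.sum_product]
  rw [Finset.sum_coe_sort R (fun i => ∑ j : R, B i j * C j i)]
  exact Finset.sum_congr rfl fun i _ => Finset.sum_coe_sort R (fun j => B i j * C j i)

theorem toep_apply_eq_of_sub_eq {d : ℕ} (a : Fin d → ℝ) {j k j' k' : Fin d}
    (h : (j : ℤ) - k = (j' : ℤ) - k') : toep a j k = toep a j' k' := by
  unfold toep
  congr 2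
  unfold Nat.dist
  omega

theorem toep_isSymm {d : ℕ} (a : Fin d → ℝ) : (toep a).IsSymm :=
  IsSymm.ext fun j k => by unfold toep; simp only [Nat.dist_comm]

/-- `â_s`; it is `0` when `R_s = ∅`, as `1 / 0 = 0`. -/
noncomputable def diagAvg {d : ℕ} (R : Finset (Fin d)) (A : Matrix (Fin d) (Fin d) ℝ) :
    Fin d → ℝ :=
  fun s => (1 / ((pairsOf R s.1).card : ℝ)) * ∑ p ∈ pairsOf R s.1, A p.1 p.2

theorem sum_pairsOf_toep_diagAvg {d : ℕ} (R : Finset (Fin d)) (A : Matrix (Fin d) (Fin d) ℝ)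
    (s : ℕ) :
    ∑ p ∈ pairsOf R s, toep (diagAvg R A) p.1 p.2 = ∑ p ∈ pairsOf R s, A p.1 p.2 := by
  rcases (pairsOf R s).eq_empty_or_nonempty with hempty | ⟨p₀, hp₀⟩
  · simp [hempty]
  have hoffset : ∀ p ∈ pairsOf R s, (p.1 : ℕ) = p.2 + s :=
    fun p hp => (Finset.mem_filter.1 hp).2
  have hs : s < d := by have := hoffset p₀ hp₀; omega
  have hconst : ∀ p ∈ pairsOf R s, toep (diagAvg R A) p.1 p.2 = diagAvg R A ⟨s, hs⟩ :=
    fun p hp => by unfold toep Nat.dist; congr 2; have := hoffset p hp; omega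
  have hcard : ((pairsOf R s).card : ℝ) ≠ 0 := by
    exact_mod_cast (Finset.card_pos.2 ⟨p₀, hp₀⟩).ne'
  rw [Finset.sum_congr rfl hconst, Finset.sum_const, nsmul_eq_mul, diagAvg]
  field_simp

theorem filter_sub_eq_natCast {d : ℕ} (R : Finset (Fin d)) (s : ℕ) :
    (R ×ˢ R).filter (fun p => (p.1 : ℤ) - p.2 = s) = pairsOf R s := by
  ext p
  simp only [pairsOf, Finset.mem_filter]
  exact and_congr_right fun _ => by omega

theorem sum_filter_sub_eq_neg_of_isSymm {d : ℕ} (R : Finset (Fin d))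
    {B : Matrix (Fin d) (Fin d) ℝ} (hB : B.IsSymm) (t : ℤ) :
    ∑ p ∈ R ×ˢ R with (p.1 : ℤ) - p.2 = -t, B p.1 p.2 =
      ∑ p ∈ R ×ˢ R with (p.1 : ℤ) - p.2 = t, B p.1 p.2 := by
  refine Finset.sum_equiv (Equiv.prodComm _ _) (fun p => ?_) (fun p _ => hB.apply p.2 p.1)
  simp only [Finset.mem_filter, Finset.mem_product, Equiv.prodComm_apply, Prod.fst_swap,
    Prod.snd_swap, and_comm (a := p.1 ∈ R)]
  exact and_congr_right fun _ => by omega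

theorem sum_filter_sub_toep_diagAvg {d : ℕ} (R : Finset (Fin d))
    {A : Matrix (Fin d) (Fin d) ℝ} (hA : A.IsSymm) (t : ℤ) :
    ∑ p ∈ R ×ˢ R with (p.1 : ℤ) - p.2 = t, toep (diagAvg R A) p.1 p.2 =
      ∑ p ∈ R ×ˢ R with (p.1 : ℤ) - p.2 = t, A p.1 p.2 := by
  obtain ⟨s, rfl | rfl⟩ := t.eq_nat_or_neg
  · rw [filter_sub_eq_natCast, sum_pairsOf_toep_diagAvg]
  · rw [sum_filter_sub_eq_neg_of_isSymm R (toep_isSymm _), sum_filter_sub_eq_neg_of_isSymm R hA,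
      filter_sub_eq_natCast, sum_pairsOf_toep_diagAvg]

theorem trace_avg_toeplitz_submatrix_general
    {d : ℕ} (R : Finset (Fin d))
    (A : Matrix (Fin d) (Fin d) ℝ) (hA : A.IsSymm) :
    ∀ mvec : Fin d → ℝ,
      Matrix.trace
        (subMatrix (toep fun s : Fin d =>
            (1 / ((pairsOf R s.1).card : ℝ)) * ∑ p ∈ pairsOf R s.1, A p.1 p.2) R *
          subMatrix (toep mvec) R) =
      Matrix.trace (subMatrix A R * subMatrix (toep mvec) R) := by
  intro mvec
  change trace (subMatrix (toep (diagAvg R A)) R * _) = _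
  rw [trace_subMatrix_mul, trace_subMatrix_mul]
  exact Finset.sum_mul_eq_sum_mul_of_sum_fiber_eq
    (fun p _ q _ hpq => toep_apply_eq_of_sub_eq mvec (by omega))
    (sum_filter_sub_toep_diagAvg R hA)

/-- for a ruler `R` and a symmetric matrix `A`, the diagonal-averaged
Toeplitz matrix `Â = Toep(â)`, `â_s = (1/|R_s|) Σ_{(j,k)∈R_s} A_{j,k}`, satisfies
`tr(Â_R M_R) = tr(A_R M_R)` for every symmetric Toeplitz matrix `M`. -/
theorem trace_avg_toeplitz_submatrix
    {d : ℕ} (R : Finset (Fin d)) (hR : IsRuler R)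
    (A : Matrix (Fin d) (Fin d) ℝ) (hA : A.IsSymm) :
    ∀ mvec : Fin d → ℝ,
      Matrix.trace
        (subMatrix (toep fun s : Fin d =>
            (1 / ((pairsOf R s.1).card : ℝ)) * ∑ p ∈ pairsOf R s.1, A p.1 p.2) R *
          subMatrix (toep mvec) R) =
      Matrix.trace (subMatrix A R * subMatrix (toep mvec) R) :=
  trace_avg_toeplitz_submatrix_general R A hA
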